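/- arXiv:2601.01808 — 3 statements merged into one kernel-verified Lean document; each statement's English description precedes it below -/
import Mathlib

section
/- Let Ω ⊂ ℝ^d satisfy an interior cone condition with angle α ∈ (0, π/2) and radius r > 0, i.e., for every x ∈ Ω there is a unit vector ξ(x) with the cone C(x, ξ(x), α, r) = { x + λ y : ‖y‖₂ = 1, y·ξ(x) ≥ cos α, λ ∈ [0, r] } ⊂ Ω. Define Z_n := { z ∈ 2^{-n} ℤ^d : z + [0, 2^{-n}]^d ⊂ Ω }. Then there exist n₀ ∈ ℕ and a constant C_Ω = 2√d (1+sin α)/sin α such that for all n ≥ n₀ and all shift vectors b ∈ [0, 2^{-n}]^d, the fill distance satisfies h_{Z_n + b, Ω} := sup_{x∈Ω} min_{z∈Z_n} ‖x − (z+b)‖₂ ≤ C_Ω 2^{-n}. -/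
open scoped RealInnerProductSpace

/-!
Put `δ = 2^{-n}` and `s = sin α`. Going a distance `t = 2√d δ / s` from `x` along the cone axis
`ξ(x)` reaches a point `c` whose closed ball of radius `t s = 2√d δ` lies in the cone at `x`,
of height `t (1 + s) = C_Ω δ ≤ r` once `n` is large. The grid cube of side `δ` containing `c` has
diameter `√d δ`, so it lies in that ball and hence in `Ω`, and its corner `z` satisfies
`‖x - (z + b)‖ ≤ t + √d δ + √d δ = C_Ω δ`.
-/

open Metric

section Cone

variable {E : Type*} [NormedAddCommGroup E] [InnerProductSpace ℝ E]

def cone (x ξ : E) (α r : ℝ) : Set E :=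
  {p | ∃ (y : E) (l : ℝ), ‖y‖ = 1 ∧ ⟪y, ξ⟫ ≥ Real.cos α ∧ l ∈ Set.Icc 0 r ∧ p = x + l • y}

theorem cone_mono {x ξ : E} {α r r' : ℝ} (h : r ≤ r') : cone x ξ α r ⊆ cone x ξ α r' := by
  rintro p ⟨y, l, hy, hyξ, ⟨hl0, hlr⟩, rfl⟩
  exact ⟨y, l, hy, hyξ, ⟨hl0, hlr.trans h⟩, rfl⟩

theorem norm_mul_cos_le_inner_of_norm_sub_smul_le {u ξ : E} {t α : ℝ} (hξ : ‖ξ‖ = 1)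
    (ht : 0 < t) (hu : ‖u - t • ξ‖ ≤ t * Real.sin α) : ‖u‖ * Real.cos α ≤ ⟪u, ξ⟫ := by
  have hsq : ‖u‖ ^ 2 - 2 * (t * ⟪u, ξ⟫) + t ^ 2 ≤ (t * Real.sin α) ^ 2 := by
    rw [← sq_abs t, ← Real.norm_eq_abs, ← mul_one ‖t‖, ← hξ, ← norm_smul, ← real_inner_smul_right,
      ← norm_sub_sq_real]
    exact pow_le_pow_left₀ (norm_nonneg _) hu 2
  -- `‖u‖² + t² cos² α ≤ 2 t ⟪u, ξ⟫`, and AM-GM bounds the left side below by `2 t ‖u‖ cos α`.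
  nlinarith [Real.sin_sq_add_cos_sq α, sq_nonneg (‖u‖ - t * Real.cos α)]

theorem closedBall_subset_cone {x ξ : E} {t α : ℝ} (hξ : ‖ξ‖ = 1) (ht : 0 ≤ t) :
    closedBall (x + t • ξ) (t * Real.sin α) ⊆ cone x ξ α (t * (1 + Real.sin α)) := by
  intro p hp
  rw [mem_closedBall, dist_eq_norm, sub_add_eq_sub_sub] at hp
  have hnorm : ‖p - x‖ ≤ t * (1 + Real.sin α) := by
    calc ‖p - x‖ ≤ ‖t • ξ‖ + ‖p - x - t • ξ‖ := norm_le_norm_add_norm_sub' _ _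
      _ ≤ t + t * Real.sin α := by
        rw [norm_smul, hξ, Real.norm_of_nonneg ht, mul_one]; gcongr
      _ = t * (1 + Real.sin α) := by ring
  rcases eq_or_ne (p - x) 0 with hpx | hpx
  · refine ⟨ξ, 0, hξ, ?_, ⟨le_rfl, by simpa [hpx] using hnorm⟩, by simpa using (sub_eq_zero.1 hpx)⟩
    rw [real_inner_self_eq_norm_sq, hξ, one_pow]
    exact Real.cos_le_one α
  · have hpos : 0 < ‖p - x‖ := norm_pos_iff.2 hpx
    have ht' : 0 < t := ht.lt_of_ne <| by
      rintro rfl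
      linarith [hnorm.trans_eq (zero_mul _)]
    refine ⟨‖p - x‖⁻¹ • (p - x), ‖p - x‖, norm_smul_inv_norm hpx, ?_, ⟨hpos.le, hnorm⟩, ?_⟩
    · rw [real_inner_smul_left, ge_iff_le, le_inv_mul_iff₀ hpos]
      exact norm_mul_cos_le_inner_of_norm_sub_smul_le hξ ht' hp
    · rw [smul_inv_smul₀ hpos.ne', add_sub_cancel]

end Cone

section Grid

variable {ι : Type*}

theorem EuclideanSpace.norm_le_sqrt_card_mul [Fintype ι] {v : EuclideanSpace ℝ ι} {a : ℝ}
    (ha : 0 ≤ a) (h : ∀ i, |v i| ≤ a) : ‖v‖ ≤ √(Fintype.card ι) * a := by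
  rw [EuclideanSpace.norm_eq, ← Real.sqrt_sq ha, ← Real.sqrt_mul (Nat.cast_nonneg _)]
  gcongr
  calc ∑ i, ‖v i‖ ^ 2 ≤ ∑ _i : ι, a ^ 2 := by
        gcongr with i
        rw [Real.norm_eq_abs]
        exact h i
    _ = Fintype.card ι * a ^ 2 := by simp

def cube (z : EuclideanSpace ℝ ι) (δ : ℝ) : Set (EuclideanSpace ℝ ι) :=
  {y | ∀ i, y i ∈ Set.Icc (z i) (z i + δ)}

theorem norm_sub_le_of_mem_cube [Fintype ι] {y c z : EuclideanSpace ℝ ι} {δ : ℝ} (hδ : 0 ≤ δ)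
    (hy : y ∈ cube z δ) (hc : c ∈ cube z δ) : ‖y - c‖ ≤ √(Fintype.card ι) * δ := by
  refine EuclideanSpace.norm_le_sqrt_card_mul hδ fun i => ?_
  obtain ⟨hy₁, hy₂⟩ := hy i
  obtain ⟨hc₁, hc₂⟩ := hc i
  rw [PiLp.sub_apply, abs_sub_le_iff]
  constructor <;> linarith

noncomputable def gridFloor (δ : ℝ) (c : EuclideanSpace ℝ ι) : EuclideanSpace ℝ ι :=
  WithLp.toLp 2 fun i => δ * ⌊c i / δ⌋

theorem mem_cube_gridFloor {δ : ℝ} (hδ : 0 < δ) (c : EuclideanSpace ℝ ι) :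
    c ∈ cube (gridFloor δ c) δ := by
  intro i
  simp only [gridFloor, PiLp.toLp_apply, Set.mem_Icc]
  constructor
  · rw [← le_div_iff₀' hδ]
    exact Int.floor_le _
  · rw [← mul_add_one, ← div_le_iff₀' hδ]
    exact (Int.lt_floor_add_one _).le

theorem cube_gridFloor_subset_closedBall [Fintype ι] {δ : ℝ} (hδ : 0 < δ)
    (c : EuclideanSpace ℝ ι) : cube (gridFloor δ c) δ ⊆ closedBall c (√(Fintype.card ι) * δ) :=
  fun _ hy => mem_closedBall_iff_norm.2 <|
    norm_sub_le_of_mem_cube hδ.le hy (mem_cube_gridFloor hδ c)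

theorem norm_sub_gridFloor_le [Fintype ι] {δ : ℝ} (hδ : 0 < δ) (c : EuclideanSpace ℝ ι) :
    ‖c - gridFloor δ c‖ ≤ √(Fintype.card ι) * δ :=
  norm_sub_le_of_mem_cube hδ.le (mem_cube_gridFloor hδ c) fun _ =>
    ⟨le_rfl, le_add_of_nonneg_right hδ.le⟩

end Grid

theorem exists_mul_two_rpow_neg_le {C r : ℝ} (hr : 0 < r) :
    ∃ n₀ : ℕ, ∀ n : ℕ, n₀ ≤ n → C * (2 : ℝ) ^ (-(n : ℝ)) ≤ r := by
  obtain ⟨n₀, hn₀⟩ := pow_unbounded_of_one_lt (C / r) one_lt_two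
  refine ⟨n₀, fun n hn => ?_⟩
  rw [Real.rpow_neg zero_le_two, Real.rpow_natCast, ← div_eq_mul_inv, div_le_iff₀ (by positivity)]
  calc C = C / r * r := by field_simp
    _ ≤ 2 ^ n₀ * r := by gcongr
    _ ≤ r * 2 ^ n := by rw [mul_comm]; gcongr; exact one_le_two

theorem fill_distance_of_grid_general
    {d : ℕ}
    (Ω : Set (EuclideanSpace ℝ (Fin d)))
    (α : ℝ) (hα0 : 0 < α) (hα1 : α < Real.pi / 2) (r : ℝ) (hr : 0 < r)
    (hcone : ∀ x ∈ Ω, ∃ ξ : EuclideanSpace ℝ (Fin d), ‖ξ‖ = 1 ∧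
      {p : EuclideanSpace ℝ (Fin d) |
        ∃ (y : EuclideanSpace ℝ (Fin d)) (l : ℝ), ‖y‖ = 1 ∧ ⟪y, ξ⟫ ≥ Real.cos α ∧
          l ∈ Set.Icc (0 : ℝ) r ∧ p = x + l • y} ⊆ Ω) :
    ∃ n₀ : ℕ, ∀ n : ℕ, n₀ ≤ n →
      ∀ b : EuclideanSpace ℝ (Fin d), (∀ i, b i ∈ Set.Icc (0 : ℝ) ((2 : ℝ) ^ (-(n : ℝ)))) →
        ∀ x ∈ Ω, ∃ z : EuclideanSpace ℝ (Fin d),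
          (∃ m : Fin d → ℤ, (∀ i, z i = (2 : ℝ) ^ (-(n : ℝ)) * m i) ∧
            {y : EuclideanSpace ℝ (Fin d) |
              ∀ i, y i ∈ Set.Icc (z i) (z i + (2 : ℝ) ^ (-(n : ℝ)))} ⊆ Ω) ∧
          ‖x - (z + b)‖ ≤
            (2 * Real.sqrt d * (1 + Real.sin α) / Real.sin α) * (2 : ℝ) ^ (-(n : ℝ)) := by
  set s := Real.sin α
  have hs : 0 < s := Real.sin_pos_of_pos_of_lt_pi hα0 (by linarith [Real.pi_pos])
  obtain ⟨n₀, hn₀⟩ := exists_mul_two_rpow_neg_le (C := 2 * √d * (1 + s) / s) hr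
  refine ⟨n₀, fun n hn b hb x hx => ?_⟩
  set δ := (2 : ℝ) ^ (-(n : ℝ))
  have hδ : 0 < δ := by positivity
  obtain ⟨ξ, hξ, hsub⟩ := hcone x hx
  set t := 2 * √d * δ / s
  have hts : t * s = 2 * √d * δ := div_mul_cancel₀ _ hs.ne'
  have hheight : t * (1 + s) = 2 * √d * (1 + s) / s * δ := by
    simp only [t]
    field_simp
  set c := x + t • ξ
  have hball : closedBall c (2 * √d * δ) ⊆ Ω :=
    hts ▸ (closedBall_subset_cone hξ (by positivity)).trans
      ((cone_mono (hheight ▸ hn₀ n hn)).trans hsub)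
  have hcz : ‖c - gridFloor δ c‖ ≤ √d * δ := by
    simpa using norm_sub_gridFloor_le hδ c
  have hbn : ‖b‖ ≤ √d * δ := by
    simpa using EuclideanSpace.norm_le_sqrt_card_mul hδ.le
      fun i => abs_le.2 ⟨by linarith [(hb i).1], (hb i).2⟩
  refine ⟨gridFloor δ c, ⟨fun i => ⌊c i / δ⌋, fun i => rfl, ?_⟩, ?_⟩
  · refine (cube_gridFloor_subset_closedBall hδ c).trans
      ((closedBall_subset_closedBall ?_).trans hball)
    rw [Fintype.card_fin]
    nlinarith [Real.sqrt_nonneg d]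
  · calc ‖x - (gridFloor δ c + b)‖ = ‖-(t • ξ) + (c - gridFloor δ c) - b‖ := by
          congr 1; simp only [c]; abel
      _ ≤ t + √d * δ + √d * δ := by
          refine (norm_sub_le _ _).trans (add_le_add ((norm_add_le _ _).trans ?_) hbn)
          rw [norm_neg, norm_smul, hξ, Real.norm_of_nonneg (by positivity), mul_one]
          gcongr
      _ = 2 * √d * (1 + s) / s * δ := by
          rw [← hheight, mul_one_add, hts]; ring

/-- Fill distance of shifted grids in a domain with interior cone condition: there are
`n₀` and `C_Ω = 2√d (1+sin α)/sin α` such that for all `n ≥ n₀` and shifts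
`b ∈ [0,2^{-n}]^d`, every `x ∈ Ω` is within distance `C_Ω 2^{-n}` of some point of `Z_n + b`,
where `Z_n = { z ∈ 2^{-n}ℤ^d : z + [0,2^{-n}]^d ⊆ Ω }`. -/
theorem fill_distance_of_grid
    {d : ℕ} (hd : 0 < d)
    (Ω : Set (EuclideanSpace ℝ (Fin d)))
    (α : ℝ) (hα0 : 0 < α) (hα1 : α < Real.pi / 2) (r : ℝ) (hr : 0 < r)
    (hcone : ∀ x ∈ Ω, ∃ ξ : EuclideanSpace ℝ (Fin d), ‖ξ‖ = 1 ∧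
      {p : EuclideanSpace ℝ (Fin d) |
        ∃ (y : EuclideanSpace ℝ (Fin d)) (l : ℝ), ‖y‖ = 1 ∧ ⟪y, ξ⟫ ≥ Real.cos α ∧
          l ∈ Set.Icc (0 : ℝ) r ∧ p = x + l • y} ⊆ Ω) :
    ∃ n₀ : ℕ, ∀ n : ℕ, n₀ ≤ n →
      ∀ b : EuclideanSpace ℝ (Fin d), (∀ i, b i ∈ Set.Icc (0 : ℝ) ((2 : ℝ) ^ (-(n : ℝ)))) →
        ∀ x ∈ Ω, ∃ z : EuclideanSpace ℝ (Fin d),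
          (∃ m : Fin d → ℤ, (∀ i, z i = (2 : ℝ) ^ (-(n : ℝ)) * m i) ∧
            {y : EuclideanSpace ℝ (Fin d) |
              ∀ i, y i ∈ Set.Icc (z i) (z i + (2 : ℝ) ^ (-(n : ℝ)))} ⊆ Ω) ∧
          ‖x - (z + b)‖ ≤
            (2 * Real.sqrt d * (1 + Real.sin α) / Real.sin α) * (2 : ℝ) ^ (-(n : ℝ)) :=
  fill_distance_of_grid_general Ω α hα0 hα1 r hr hcone
end

section
/- Let V be a Hilbert space, W ⊂ V a closed subspace, f ∈ V, and s = Π_W f the orthogonal projection of f onto W. Suppose additionally V carries a second norm ‖·‖₀ and a third norm family such that the Hölder inequality |⟨f, g⟩_V| ≤ ‖f‖_θ ‖g‖_{2−θ} and the interpolation inequality ‖g‖_{2−θ} ≤ ‖g‖₀^{θ−1} ‖g‖_V^{2−θ} hold for all relevant g, where θ ∈ [1,2]. Then ‖f − s‖_V ≤ ‖f‖_θ^{1/θ} · ‖f − s‖₀^{(θ−1)/θ}. -/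
/-!
Since `f - s` is orthogonal to `s`, `‖f - s‖² = ⟪f, f - s⟫`. Hölder and interpolation bound this
by `‖f‖_θ ‖f - s‖₀^(θ-1) ‖f - s‖^(2-θ)`; dividing by `‖f - s‖^(2-θ)` and taking `θ`-th roots
gives the estimate.
-/

open scoped RealInnerProductSpace

theorem norm_sub_sq_eq_inner_of_inner_sub_eq_zero {V : Type*} [NormedAddCommGroup V]
    [InnerProductSpace ℝ V] {f s : V} (h : ⟪s, f - s⟫ = 0) : ‖f - s‖ ^ 2 = ⟪f, f - s⟫ := by
  rw [← real_inner_self_eq_norm_sq, inner_sub_left, h, sub_zero]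

namespace Real

theorem le_rpow_inv_of_rpow_le_mul_rpow_sub {n c p θ : ℝ} (hn : 0 ≤ n) (hc : 0 ≤ c)
    (hθ : 0 < θ) (h : n ^ p ≤ c * n ^ (p - θ)) : n ≤ c ^ θ⁻¹ := by
  rcases hn.eq_or_lt with rfl | hn
  · positivity
  rw [le_rpow_inv_iff_of_pos hn.le hc hθ]
  have hsplit : n ^ p = n ^ θ * n ^ (p - θ) := by
    rw [← rpow_add hn, add_sub_cancel]
  rw [hsplit] at h
  exact le_of_mul_le_mul_right h (rpow_pos_of_pos hn _)

end Real

theorem abstract_superconvergence_projection_bound_general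
    {V : Type*} [NormedAddCommGroup V] [InnerProductSpace ℝ V]
    (W : Submodule ℝ V)
    (θ : ℝ) (hθ1 : 1 ≤ θ)
    (N0 : V → ℝ) (Nθ : ℝ → V → ℝ)
    (hN0 : ∀ g, 0 ≤ N0 g) (hNθ : ∀ t g, 0 ≤ Nθ t g)
    (f s : V)
    (hHolder : ∀ g : V, |⟪f, g⟫| ≤ Nθ θ f * Nθ (2 - θ) g)
    (hInterp : ∀ g : V, Nθ (2 - θ) g ≤ N0 g ^ (θ - 1) * ‖g‖ ^ (2 - θ))
    (hsW : s ∈ W) (horth : ∀ w ∈ W, ⟪f - s, w⟫ = 0) :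
    ‖f - s‖ ≤ Nθ θ f ^ (1 / θ) * N0 (f - s) ^ ((θ - 1) / θ) := by
  have hθ : 0 < θ := by linarith
  have hA := hNθ θ f
  have hB := hN0 (f - s)
  have key : ‖f - s‖ ^ (2 : ℝ) ≤ Nθ θ f * N0 (f - s) ^ (θ - 1) * ‖f - s‖ ^ (2 - θ) :=
    calc ‖f - s‖ ^ (2 : ℝ) = ⟪f, f - s⟫ := by
          rw [Real.rpow_two, norm_sub_sq_eq_inner_of_inner_sub_eq_zero
            (by rw [real_inner_comm]; exact horth s hsW)]
      _ ≤ |⟪f, f - s⟫| := le_abs_self _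
      _ ≤ Nθ θ f * Nθ (2 - θ) (f - s) := hHolder _
      _ ≤ Nθ θ f * (N0 (f - s) ^ (θ - 1) * ‖f - s‖ ^ (2 - θ)) := by gcongr; exact hInterp _
      _ = _ := by ring
  calc ‖f - s‖ ≤ (Nθ θ f * N0 (f - s) ^ (θ - 1)) ^ θ⁻¹ :=
        Real.le_rpow_inv_of_rpow_le_mul_rpow_sub (norm_nonneg _) (by positivity) hθ key
    _ = _ := by
      rw [Real.mul_rpow hA (Real.rpow_nonneg hB _), ← Real.rpow_mul hB, one_div, div_eq_mul_inv]

/-- Abstract direct superconvergence step: if `s ∈ W` with `f - s ⊥ W` (orthogonal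
projection), the Hölder inequality `|⟨f,g⟩| ≤ N_θ f · N_{2-θ} g` and the interpolation
inequality `N_{2-θ} g ≤ (N₀ g)^{θ-1} ‖g‖^{2-θ}` hold, then
`‖f - s‖ ≤ (N_θ f)^{1/θ} (N₀ (f-s))^{(θ-1)/θ}`. -/
theorem abstract_superconvergence_projection_bound
    {V : Type*} [NormedAddCommGroup V] [InnerProductSpace ℝ V]
    (W : Submodule ℝ V)
    (θ : ℝ) (hθ1 : 1 ≤ θ) (hθ2 : θ ≤ 2)
    (N0 : V → ℝ) (Nθ : ℝ → V → ℝ)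
    (hN0 : ∀ g, 0 ≤ N0 g) (hNθ : ∀ t g, 0 ≤ Nθ t g)
    (f s : V)
    (hHolder : ∀ g : V, |⟪f, g⟫| ≤ Nθ θ f * Nθ (2 - θ) g)
    (hInterp : ∀ g : V, Nθ (2 - θ) g ≤ N0 g ^ (θ - 1) * ‖g‖ ^ (2 - θ))
    (hsW : s ∈ W) (horth : ∀ w ∈ W, ⟪f - s, w⟫ = 0) :
    ‖f - s‖ ≤ Nθ θ f ^ (1 / θ) * N0 (f - s) ^ ((θ - 1) / θ) :=
  abstract_superconvergence_projection_bound_general W θ hθ1 N0 Nθ hN0 hNθ f s hHolder hInterp hsW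
    horth
end

section
/- Under the hypotheses of the previous abstraction, additionally assume the weak-norm bound ‖f − s‖₀ ≤ C h^τ ‖f − s‖_V for constants C, h, τ > 0. Then the combined estimate ‖f − s‖₀ ≤ C^θ h^{θτ} ‖f‖_θ holds (direct superconvergence estimate with rate θτ). -/
/-!
Galerkin orthogonality turns `‖f - s‖²` into `⟪f, f - s⟫`, which the Hölder and interpolation
bounds control by `N_θ f · N₀(f - s)^(θ-1) · ‖f - s‖^(2-θ)`; hence `‖f - s‖^θ ≤ N_θ f · N₀(f - s)^(θ-1)`.
Raising the weak-norm bound `N₀(f - s) ≤ C h^τ ‖f - s‖` to the power `θ` and inserting this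
leaves `N₀(f - s)^θ ≤ (C h^τ)^θ N_θ f · N₀(f - s)^(θ-1)`, and one factor `N₀(f - s)^(θ-1)` cancels.
-/

open scoped RealInnerProductSpace

theorem inner_sub_eq_norm_sq_of_inner_sub_eq_zero {V : Type*} [NormedAddCommGroup V]
    [InnerProductSpace ℝ V] {f s : V} (h : ⟪f - s, s⟫ = 0) :
    ⟪f, f - s⟫ = ‖f - s‖ ^ 2 := by
  calc ⟪f, f - s⟫ = ⟪f - s, f - s⟫ + ⟪f - s, s⟫ := by
        rw [real_inner_comm s (f - s), ← inner_add_left, sub_add_cancel]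
    _ = ‖f - s‖ ^ 2 := by rw [h, add_zero, real_inner_self_eq_norm_sq]

namespace Real

theorem rpow_le_mul_of_sq_le_mul_rpow {a b F θ : ℝ} (ha : 0 < a)
    (h : a ^ 2 ≤ F * b * a ^ (2 - θ)) : a ^ θ ≤ F * b := by
  have hsplit : a ^ θ * a ^ (2 - θ) = a ^ 2 := by
    rw [← rpow_add ha, add_sub_cancel, rpow_two]
  exact le_of_mul_le_mul_right (hsplit ▸ h) (rpow_pos_of_pos ha _)

theorem le_rpow_mul_of_le_mul_of_rpow_le {x a K F θ : ℝ} (hθ : 0 ≤ θ) (hK : 0 ≤ K)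
    (hx : 0 < x) (hxa : x ≤ K * a) (haθ : a ^ θ ≤ F * x ^ (θ - 1)) : x ≤ K ^ θ * F := by
  have ha : 0 ≤ a := (pos_of_mul_pos_right (hx.trans_le hxa) hK).le
  have hxθ : x ^ (θ - 1) * x = x ^ θ := by
    rw [← rpow_add_one hx.ne', sub_add_cancel]
  refine le_of_mul_le_mul_left ?_ (rpow_pos_of_pos hx (θ - 1))
  calc x ^ (θ - 1) * x = x ^ θ := hxθ
    _ ≤ (K * a) ^ θ := rpow_le_rpow hx.le hxa hθ
    _ = K ^ θ * a ^ θ := mul_rpow hK ha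
    _ ≤ K ^ θ * (F * x ^ (θ - 1)) := mul_le_mul_of_nonneg_left haθ (rpow_nonneg hK θ)
    _ = x ^ (θ - 1) * (K ^ θ * F) := by ring

end Real

theorem abstract_direct_superconvergence_general
    {V : Type*} [NormedAddCommGroup V] [InnerProductSpace ℝ V]
    (W : Submodule ℝ V)
    (θ : ℝ) (hθ1 : 1 ≤ θ)
    (N0 : V → ℝ) (Nθ : ℝ → V → ℝ)
    (hNθ : ∀ t g, 0 ≤ Nθ t g)
    (f s : V)
    (hHolder : ∀ g : V, |⟪f, g⟫| ≤ Nθ θ f * Nθ (2 - θ) g)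
    (hInterp : ∀ g : V, Nθ (2 - θ) g ≤ N0 g ^ (θ - 1) * ‖g‖ ^ (2 - θ))
    (hsW : s ∈ W) (horth : ∀ w ∈ W, ⟪f - s, w⟫ = 0)
    (C h τ : ℝ) (hC : 0 < C) (hh : 0 < h)
    (hweak : N0 (f - s) ≤ C * h ^ τ * ‖f - s‖) :
    N0 (f - s) ≤ C ^ θ * h ^ (θ * τ) * Nθ θ f := by
  have hF := hNθ θ f
  rcases le_or_gt (N0 (f - s)) 0 with hx | hx
  · exact hx.trans (by positivity)
  have hK : 0 < C * h ^ τ := by positivity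
  have ha : 0 < ‖f - s‖ := pos_of_mul_pos_right (hx.trans_le hweak) hK.le
  have hsq : ‖f - s‖ ^ 2 ≤ Nθ θ f * N0 (f - s) ^ (θ - 1) * ‖f - s‖ ^ (2 - θ) :=
    calc ‖f - s‖ ^ 2 = ⟪f, f - s⟫ :=
          (inner_sub_eq_norm_sq_of_inner_sub_eq_zero (horth s hsW)).symm
      _ ≤ Nθ θ f * Nθ (2 - θ) (f - s) := (le_abs_self _).trans (hHolder _)
      _ ≤ Nθ θ f * (N0 (f - s) ^ (θ - 1) * ‖f - s‖ ^ (2 - θ)) :=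
          mul_le_mul_of_nonneg_left (hInterp _) hF
      _ = _ := by ring
  have key := Real.le_rpow_mul_of_le_mul_of_rpow_le (by linarith) hK.le hx hweak
    (Real.rpow_le_mul_of_sq_le_mul_rpow ha hsq)
  rwa [Real.mul_rpow hC.le (Real.rpow_nonneg hh.le τ), ← Real.rpow_mul hh.le, mul_comm τ] at key

/-- Direct superconvergence estimate: under the abstract projection/Hölder/interpolation
hypotheses, combining with the weak-norm bound `N₀(f-s) ≤ C h^τ ‖f-s‖` yields
`N₀(f-s) ≤ C^θ h^{θτ} N_θ f`. -/
theorem abstract_direct_superconvergence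
    {V : Type*} [NormedAddCommGroup V] [InnerProductSpace ℝ V]
    (W : Submodule ℝ V)
    (θ : ℝ) (hθ1 : 1 ≤ θ) (hθ2 : θ ≤ 2)
    (N0 : V → ℝ) (Nθ : ℝ → V → ℝ)
    (hN0 : ∀ g, 0 ≤ N0 g) (hNθ : ∀ t g, 0 ≤ Nθ t g)
    (f s : V)
    (hHolder : ∀ g : V, |⟪f, g⟫| ≤ Nθ θ f * Nθ (2 - θ) g)
    (hInterp : ∀ g : V, Nθ (2 - θ) g ≤ N0 g ^ (θ - 1) * ‖g‖ ^ (2 - θ))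
    (hsW : s ∈ W) (horth : ∀ w ∈ W, ⟪f - s, w⟫ = 0)
    (C h τ : ℝ) (hC : 0 < C) (hh : 0 < h) (hτ : 0 < τ)
    (hweak : N0 (f - s) ≤ C * h ^ τ * ‖f - s‖) :
    N0 (f - s) ≤ C ^ θ * h ^ (θ * τ) * Nθ θ f :=
  abstract_direct_superconvergence_general W θ hθ1 N0 Nθ hNθ f s hHolder hInterp hsW horth C h τ hC
    hh hweak
end
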